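/- arXiv:1905.10389 — 6 statements merged into one kernel-verified Lean document; each statement's English description precedes it below -/
import Mathlib

section
/- Let S and A be nonempty finite sets, H ≥ 1 an integer, r : S × A → ℝ a reward function with 0 ≤ r(s,a) ≤ 1 for all (s,a), φ : S × A → ℝ^d and ψ : S → ℝ^{d'} feature maps, and M* ∈ ℝ^{d×d'} a matrix such that for every (s,a) the function s̃ ↦ P(s̃|s,a) := φ(s,a)ᵀ M* ψ(s̃) is nonnegative and sums to 1 over s̃ ∈ S. Define the optimal value functions by Q*_H(s,a) = r(s,a), and for 1 ≤ h < H, V*_{h+1}(s) = max_a Q*_{h+1}(s,a) and Q*_h(s,a) = r(s,a) + ∑_{s̃∈S} P(s̃|s,a) V*_{h+1}(s̃). Let B ⊆ ℝ^{d×d'} be a nonempty compact set with M* ∈ B, and define the optimistic value functions by Q_{H+1}(s,a) = 0, and for 1 ≤ h ≤ H, V_{h+1}(s) = min(max(max_a Q_{h+1}(s,a), 0), H) and Q_h(s,a) = r(s,a) + max_{M ∈ B} φ(s,a)ᵀ M (∑_{s̃∈S} ψ(s̃) V_{h+1}(s̃)). Then for every h ∈ {1,…,H} and every (s,a) ∈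 S × A, Q*_h(s,a) ≤ Q_h(s,a). -/
open Matrix Finset

theorem dot_comb_aux {d d' : ℕ} {S : Type*} [Fintype S] (φv : Fin d → ℝ)
    (M : Matrix (Fin d) (Fin d') ℝ) (ψ : S → Fin d' → ℝ) (v : S → ℝ) :
    φv ⬝ᵥ (M *ᵥ fun j => ∑ s', ψ s' j * v s') = ∑ s', (φv ⬝ᵥ (M *ᵥ ψ s')) * v s' := by
  simp only [dotProduct, mulVec, Finset.mul_sum, Finset.sum_mul]
  conv_rhs => rw [Finset.sum_comm]
  refine Finset.sum_congr rfl fun i _ => ?_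
  rw [Finset.sum_comm]
  exact Finset.sum_congr rfl fun s' _ => Finset.sum_congr rfl fun j _ => by ring

/-- Optimism lemma (Lemma 3): under the linear transition-model embedding
`P(s̃|s,a) = φ(s,a)ᵀ M* ψ(s̃)`, the optimistic Q-functions computed by maximizing
over a compact confidence set `B ∋ M*` upper bound the optimal Q-functions. -/
theorem optimism_lemma
    {S A : Type*} [Fintype S] [Nonempty S] [Fintype A] [Nonempty A]
    {d d' : ℕ} (H : ℕ) (hH : 1 ≤ H)
    (r : S × A → ℝ) (hr0 : ∀ p, 0 ≤ r p) (hr1 : ∀ p, r p ≤ 1)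
    (φ : S × A → Fin d → ℝ) (ψ : S → Fin d' → ℝ)
    (Mstar : Matrix (Fin d) (Fin d') ℝ)
    (P : S → S → A → ℝ)
    (hP : ∀ s a s', P s' s a = φ (s, a) ⬝ᵥ (Mstar *ᵥ ψ s'))
    (hP0 : ∀ s a s', 0 ≤ P s' s a)
    (hP1 : ∀ s a, ∑ s', P s' s a = 1)
    (B : Set (Matrix (Fin d) (Fin d') ℝ)) (hBne : B.Nonempty)
    (hBcomp : IsCompact B) (hBmem : Mstar ∈ B)
    (Qstar : ℕ → S → A → ℝ) (Vstar : ℕ → S → ℝ)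
    (Q : ℕ → S → A → ℝ) (V : ℕ → S → ℝ)
    (hQstarH : ∀ s a, Qstar H s a = r (s, a))
    (hVstar : ∀ h, 1 ≤ h → h < H → ∀ s,
      Vstar (h + 1) s = univ.sup' univ_nonempty (fun a => Qstar (h + 1) s a))
    (hQstar : ∀ h, 1 ≤ h → h < H → ∀ s a,
      Qstar h s a = r (s, a) + ∑ s', P s' s a * Vstar (h + 1) s')
    (hQH1 : ∀ s a, Q (H + 1) s a = 0)
    (hV : ∀ h, 1 ≤ h → h ≤ H → ∀ s,
      V (h + 1) s = min (max (univ.sup' univ_nonempty (fun a => Q (h + 1) s a)) 0) (H : ℝ))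
    (hQ : ∀ h, 1 ≤ h → h ≤ H → ∀ s a,
      Q h s a = r (s, a) +
        sSup ((fun M : Matrix (Fin d) (Fin d') ℝ =>
          φ (s, a) ⬝ᵥ (M *ᵥ fun j => ∑ s', ψ s' j * V (h + 1) s')) '' B)) :
    ∀ h, 1 ≤ h → h ≤ H → ∀ s a, Qstar h s a ≤ Q h s a := by
  classical
  -- the sSup is at least the value at Mstar
  have hsup : ∀ (p : S × A) (w : Fin d' → ℝ),
      φ p ⬝ᵥ (Mstar *ᵥ w) ≤ sSup ((fun M : Matrix (Fin d) (Fin d') ℝ =>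
        φ p ⬝ᵥ (M *ᵥ w)) '' B) := by
    intro p w
    have hcont : Continuous fun M : Matrix (Fin d) (Fin d') ℝ => φ p ⬝ᵥ (M *ᵥ w) := by
      simp only [dotProduct, mulVec]; fun_prop
    have hbdd : BddAbove ((fun M : Matrix (Fin d) (Fin d') ℝ =>
        φ p ⬝ᵥ (M *ᵥ w)) '' B) := (hBcomp.image hcont).bddAbove
    exact le_csSup hbdd (Set.mem_image_of_mem _ hBmem)
  -- upper bound on Qstar
  have hub : ∀ k h, 1 ≤ h → h + k = H → ∀ s a, Qstar h s a ≤ (k + 1 : ℝ) := by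
    intro k
    induction k with
    | zero =>
      intro h h1 hk s a
      have : h = H := by omega
      subst this
      rw [hQstarH]
      have := hr1 (s, a); push_cast; linarith
    | succ n ih =>
      intro h h1 hk s a
      have hlt : h < H := by omega
      rw [hQstar h h1 hlt]
      have hVb : ∀ s', Vstar (h + 1) s' ≤ (n + 1 : ℝ) := by
        intro s'
        rw [hVstar h h1 hlt]
        exact Finset.sup'_le _ _ fun a' _ => ih (h + 1) (by omega) (by omega) s' a'
      have hsum : ∑ s', P s' s a * Vstar (h + 1) s' ≤ ∑ s', P s' s a * (n + 1 : ℝ) :=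
        Finset.sum_le_sum fun s' _ =>
          mul_le_mul_of_nonneg_left (hVb s') (hP0 s a s')
      have h2 : ∑ s', P s' s a * (n + 1 : ℝ) = (n + 1 : ℝ) := by
        rw [← Finset.sum_mul, hP1, one_mul]
      have := hr1 (s, a)
      push_cast
      push_cast at hsum h2
      linarith
  -- main downward induction
  have main : ∀ k h, 1 ≤ h → h + k = H → ∀ s a, Qstar h s a ≤ Q h s a := by
    intro k
    induction k with
    | zero =>
      intro h h1 hk s a
      have : h = H := by omega
      subst this
      rw [hQstarH, hQ h h1 le_rfl]
      have hV1 : ∀ s', V (h + 1) s' = 0 := by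
        intro s'
        rw [hV h h1 le_rfl]
        have : univ.sup' univ_nonempty (fun a => Q (h + 1) s' a) = 0 := by
          apply le_antisymm
          · exact Finset.sup'_le _ _ fun a' _ => le_of_eq (hQH1 s' a')
          · exact le_trans (le_of_eq (hQH1 s' (Classical.arbitrary A)).symm)
              (Finset.le_sup' _ (Finset.mem_univ _))
        rw [this, max_self, min_eq_left (by positivity)]
      have h0 : (0 : ℝ) ≤ sSup ((fun M : Matrix (Fin d) (Fin d') ℝ =>
          φ (s, a) ⬝ᵥ (M *ᵥ fun j => ∑ s', ψ s' j * V (h + 1) s')) '' B) := by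
        refine le_trans ?_ (hsup (s, a) _)
        rw [dot_comb_aux]
        apply le_of_eq
        symm
        refine Finset.sum_eq_zero fun s' _ => ?_
        rw [hV1 s', mul_zero]
      linarith
    | succ n ih =>
      intro h h1 hk s a
      have hlt : h < H := by omega
      rw [hQstar h h1 hlt, hQ h h1 (le_of_lt hlt)]
      have hVle : ∀ s', Vstar (h + 1) s' ≤ V (h + 1) s' := by
        intro s'
        rw [hVstar h h1 hlt, hV h h1 (le_of_lt hlt)]
        have hle1 : univ.sup' univ_nonempty (fun a => Qstar (h + 1) s' a) ≤
            univ.sup' univ_nonempty (fun a => Q (h + 1) s' a) := by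
          apply Finset.sup'_le
          intro a' _
          exact le_trans (ih (h + 1) (by omega) (by omega) s' a')
            (Finset.le_sup' _ (Finset.mem_univ _))
        have hleH : univ.sup' univ_nonempty (fun a => Qstar (h + 1) s' a) ≤ (H : ℝ) := by
          apply Finset.sup'_le
          intro a' _
          have := hub (H - (h + 1)) (h + 1) (by omega) (by omega) s' a'
          have hcast : ((H - (h + 1) : ℕ) : ℝ) + 1 ≤ (H : ℝ) := by
            have : (H - (h + 1) : ℕ) + 1 ≤ H := by omega
            exact_mod_cast this
          linarith
        exact le_min (le_max_of_le_left hle1) hleH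
      have hsum : ∑ s', P s' s a * Vstar (h + 1) s' ≤ ∑ s', P s' s a * V (h + 1) s' :=
        Finset.sum_le_sum fun s' _ =>
          mul_le_mul_of_nonneg_left (hVle s') (hP0 s a s')
      have h2 : ∑ s', P s' s a * V (h + 1) s' ≤
          sSup ((fun M : Matrix (Fin d) (Fin d') ℝ =>
            φ (s, a) ⬝ᵥ (M *ᵥ fun j => ∑ s', ψ s' j * V (h + 1) s')) '' B) := by
        refine le_trans ?_ (hsup (s, a) _)
        rw [dot_comb_aux]
        apply le_of_eq
        exact Finset.sum_congr rfl fun s' _ => by rw [hP s a s']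
      linarith
  intro h h1 h2 s a
  exact main (H - h) h h1 (by omega) s a
end

section
/- Let A ∈ ℝ^{d×d} be a positive definite matrix, let M, M' ∈ ℝ^{d×d'} be matrices, let φ ∈ ℝ^d be a vector, and let β > 0. If ‖A^{1/2}(M − M')‖_F ≤ √β, then ‖(M − M')ᵀ φ‖₂ ≤ √(β · φᵀ A^{-1} φ). -/
/-! Write `S = A^{1/2}`, which is symmetric and invertible with `SᵀS = A`, and `Y = S (M - M')`.
Then `(M - M')ᵀ φ = Yᵀ v` with `v = S⁻ᵀ φ`, whose squared norm is `φᵀ (SᵀS)⁻¹ φ = φᵀ A⁻¹ φ`.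
Cauchy–Schwarz column by column gives `‖Yᵀ v‖₂ ≤ ‖Y‖_F ‖v‖₂ ≤ √β ‖v‖₂`. -/

open Matrix Finset

/-- The Frobenius norm of a matrix. -/
noncomputable def frobNorm {d d' : ℕ} (Y : Matrix (Fin d) (Fin d') ℝ) : ℝ :=
  Real.sqrt (∑ i, ∑ j, (Y i j) ^ 2)

/-- The positive semidefinite square root of a positive semidefinite matrix
(the definition of `Matrix.PosSemidef.sqrt` in the older Mathlib, since removed). -/
noncomputable def posSemidefSqrt {n : Type*} [Fintype n] [DecidableEq n]
    {A : Matrix n n ℝ} (hA : A.PosSemidef) : Matrix n n ℝ :=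
  hA.1.eigenvectorUnitary.1 * diagonal ((↑) ∘ (Real.sqrt ·) ∘ hA.1.eigenvalues) *
    (star hA.1.eigenvectorUnitary : Matrix n n ℝ)

section PosSemidefSqrt

variable {n : Type*} [Fintype n] [DecidableEq n] {A : Matrix n n ℝ}

theorem posSemidefSqrt_mul_self (hA : A.PosSemidef) :
    posSemidefSqrt hA * posSemidefSqrt hA = A := by
  have hU : (star hA.1.eigenvectorUnitary : Matrix n n ℝ) * hA.1.eigenvectorUnitary.1 = 1 :=
    Unitary.coe_star_mul_self _
  conv_rhs => rw [hA.1.spectral_theorem]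
  simp only [posSemidefSqrt, Unitary.conjStarAlgAut_apply, Matrix.mul_assoc]
  rw [← Matrix.mul_assoc _ hA.1.eigenvectorUnitary.1, hU, Matrix.one_mul,
    ← Matrix.mul_assoc (diagonal _), diagonal_mul_diagonal]
  congr 3
  funext i
  simp [Real.mul_self_sqrt (hA.eigenvalues_nonneg i)]

theorem transpose_posSemidefSqrt (hA : A.PosSemidef) :
    (posSemidefSqrt hA)ᵀ = posSemidefSqrt hA := by
  simp [posSemidefSqrt, Matrix.star_eq_conjTranspose, Matrix.mul_assoc]

end PosSemidefSqrt

namespace Matrix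

theorem sum_sq_transpose_mulVec_le {m n : Type*} [Fintype m] [Fintype n]
    (Y : Matrix m n ℝ) (v : m → ℝ) :
    ∑ j, ((Yᵀ *ᵥ v) j) ^ 2 ≤ (∑ i, ∑ j, Y i j ^ 2) * (v ⬝ᵥ v) := by
  have hcol : ∀ j, (Yᵀ *ᵥ v) j = ∑ i, Y i j * v i := fun j => rfl
  calc ∑ j, ((Yᵀ *ᵥ v) j) ^ 2 ≤ ∑ j, (∑ i, Y i j ^ 2) * ∑ i, v i ^ 2 := by
        gcongr with j
        rw [hcol]
        exact sum_mul_sq_le_sq_mul_sq _ _ _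
    _ = (∑ i, ∑ j, Y i j ^ 2) * (v ⬝ᵥ v) := by
        rw [← sum_mul, sum_comm]
        simp only [dotProduct, sq]

theorem transpose_mulVec_eq_mul_transpose_mulVec {m n : Type*} [Fintype m] [DecidableEq m]
    [Fintype n] {S : Matrix m m ℝ} (hS : IsUnit S.det) (N : Matrix m n ℝ) (φ : m → ℝ) :
    Nᵀ *ᵥ φ = (S * N)ᵀ *ᵥ (S⁻¹ᵀ *ᵥ φ) := by
  rw [transpose_mul, mulVec_mulVec, Matrix.mul_assoc, ← transpose_mul, nonsing_inv_mul _ hS,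
    transpose_one, Matrix.mul_one]

theorem inv_transpose_mulVec_dotProduct_self {m : Type*} [Fintype m] [DecidableEq m]
    (S : Matrix m m ℝ) (φ : m → ℝ) :
    (S⁻¹ᵀ *ᵥ φ) ⬝ᵥ (S⁻¹ᵀ *ᵥ φ) = φ ⬝ᵥ ((Sᵀ * S)⁻¹ *ᵥ φ) := by
  rw [Matrix.mul_inv_rev, ← mulVec_mulVec, dotProduct_mulVec φ, ← transpose_nonsing_inv,
    ← vecMul_transpose, transpose_transpose]

end Matrix

theorem sqrt_sum_sq_transpose_mulVec_le_frobNorm_mul {d d' : ℕ} (Y : Matrix (Fin d) (Fin d') ℝ)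
    (v : Fin d → ℝ) :
    Real.sqrt (∑ j, ((Yᵀ *ᵥ v) j) ^ 2) ≤ frobNorm Y * Real.sqrt (v ⬝ᵥ v) := by
  have hY : 0 ≤ ∑ i, ∑ j, Y i j ^ 2 := by positivity
  rw [frobNorm, ← Real.sqrt_mul hY]
  exact Real.sqrt_le_sqrt (sum_sq_transpose_mulVec_le Y v)

theorem confidence_ball_error_bound_frobenius_general {d d' : ℕ}
    (A : Matrix (Fin d) (Fin d) ℝ) (hA : A.PosDef)
    (M M' : Matrix (Fin d) (Fin d') ℝ) (φ : Fin d → ℝ) (β : ℝ)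
    (h : frobNorm (posSemidefSqrt hA.posSemidef * (M - M')) ≤ Real.sqrt β) :
    Real.sqrt (∑ j, (((M - M')ᵀ *ᵥ φ) j) ^ 2) ≤
      Real.sqrt (β * (φ ⬝ᵥ (A⁻¹ *ᵥ φ))) := by
  set S := posSemidefSqrt hA.posSemidef
  have hSA : Sᵀ * S = A := by rw [transpose_posSemidefSqrt, posSemidefSqrt_mul_self]
  have hS : IsUnit S.det := isUnit_det_of_left_inverse (B := A⁻¹ * Sᵀ) <| by
    rw [Matrix.mul_assoc, hSA, nonsing_inv_mul _ hA.det_pos.ne'.isUnit]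
  set v := S⁻¹ᵀ *ᵥ φ
  calc Real.sqrt (∑ j, (((M - M')ᵀ *ᵥ φ) j) ^ 2)
      = Real.sqrt (∑ j, (((S * (M - M'))ᵀ *ᵥ v) j) ^ 2) := by
        rw [← transpose_mulVec_eq_mul_transpose_mulVec hS]
    _ ≤ frobNorm (S * (M - M')) * Real.sqrt (v ⬝ᵥ v) := sqrt_sum_sq_transpose_mulVec_le_frobNorm_mul _ v
    _ ≤ Real.sqrt β * Real.sqrt (v ⬝ᵥ v) := by gcongr
    _ = Real.sqrt (β * (φ ⬝ᵥ (A⁻¹ *ᵥ φ))) := by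
        have hv : 0 ≤ v ⬝ᵥ v := sum_nonneg fun i _ => mul_self_nonneg (v i)
        rw [← Real.sqrt_mul' _ hv, inv_transpose_mulVec_dotProduct_self, hSA]

/-- Frobenius-ball analogue of Lemma 2: if `‖A^{1/2}(M − M')‖_F ≤ √β` then
`‖(M − M')ᵀ φ‖₂ ≤ √(β · φᵀ A⁻¹ φ)`. -/
theorem confidence_ball_error_bound_frobenius {d d' : ℕ}
    (A : Matrix (Fin d) (Fin d) ℝ) (hA : A.PosDef)
    (M M' : Matrix (Fin d) (Fin d') ℝ) (φ : Fin d → ℝ) (β : ℝ) (hβ : 0 < β)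
    (h : frobNorm (posSemidefSqrt hA.posSemidef * (M - M')) ≤ Real.sqrt β) :
    Real.sqrt (∑ j, (((M - M')ᵀ *ᵥ φ) j) ^ 2) ≤
      Real.sqrt (β * (φ ⬝ᵥ (A⁻¹ *ᵥ φ))) :=
  confidence_ball_error_bound_frobenius_general A hA M M' φ β h
end

section
/- Let N, H ≥ 1 be integers, C_φ > 0, and let φ_{n,h} ∈ ℝ^d for n ∈ {1,…,N}, h ∈ {1,…,H} be vectors with ‖φ_{n,h}‖₂² ≤ C_φ · d. Define A_1 = I and A_{n+1} = A_n + ∑_{h=1}^{H} φ_{n,h} φ_{n,h}ᵀ, and set w_{n,h}² = φ_{n,h}ᵀ A_n^{-1} φ_{n,h}. Then ∑_{n=1}^{N} ∑_{h=1}^{H} min(1, w_{n,h}²) ≤ 2 H · ln det(A_{N+1}) ≤ 2 H d · ln(N·H·C_φ + 1). -/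
/-!
By the matrix determinant lemma, adding `φφᵀ` to a positive definite `A` multiplies `det A` by
`1 + φᵀA⁻¹φ`, and a positive semidefinite update never decreases the determinant. Hence inside
episode `n` each `log (1 + w_{n,h})` is at most `log det A_{n+1} - log det A_n`, and with
`min 1 x ≤ 2 log (1 + x)` the episode sums telescope to `2H log det A_{N+1}`. The second bound is
AM-GM on the eigenvalues, `det A ≤ (tr A / d)^d`, together with `tr A_{N+1} ≤ d + NHCφd`.
-/

open Matrix Finset

theorem Real.min_one_le_two_mul_log_one_add {x : ℝ} (hx : 0 ≤ x) :
    min 1 x ≤ 2 * Real.log (1 + x) := by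
  have hpos : 0 < x + 2 := by linarith
  calc min 1 x ≤ 2 * (2 * x / (x + 2)) := by
        rw [← mul_div_assoc, le_div_iff₀ hpos]
        rcases le_total x 1 with h | h
        · rw [min_eq_right h]; nlinarith
        · rw [min_eq_left h]; linarith
    _ ≤ 2 * Real.log (1 + x) := by gcongr; exact Real.le_log_one_add_of_nonneg hx

theorem Real.prod_le_sum_div_card_pow {ι : Type*} (s : Finset ι) {z : ι → ℝ}
    (hz : ∀ i ∈ s, 0 ≤ z i) : ∏ i ∈ s, z i ≤ ((∑ i ∈ s, z i) / #s) ^ #s := by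
  rcases s.eq_empty_or_nonempty with rfl | hs
  · simp
  have hcard : (0 : ℝ) < #s := by exact_mod_cast hs.card_pos
  have amgm := Real.geom_mean_le_arith_mean s (fun _ => 1) z (fun _ _ => zero_le_one)
    (by simpa using hcard) hz
  simp only [Real.rpow_one, one_mul, sum_const, nsmul_eq_mul, mul_one] at amgm
  calc ∏ i ∈ s, z i = ((∏ i ∈ s, z i) ^ ((#s : ℝ)⁻¹)) ^ #s :=
        (Real.rpow_inv_natCast_pow (prod_nonneg hz) hs.card_pos.ne').symm
    _ ≤ ((∑ i ∈ s, z i) / #s) ^ #s := by gcongr; exact Real.rpow_nonneg (prod_nonneg hz) _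

theorem eq_add_sum_Icc_of_succ_eq_add {M : Type*} [AddCommMonoid M] {a b : ℕ → M}
    (hrec : ∀ k, 1 ≤ k → a (k + 1) = a k + b k) (N : ℕ) :
    a (N + 1) = a 1 + ∑ k ∈ Icc 1 N, b k := by
  induction N with
  | zero => simp
  | succ N ih => rw [hrec (N + 1) (by omega), ih, sum_Icc_succ_top (by omega), add_assoc]

namespace Matrix

variable {ι κ n : Type*} [Fintype n]

theorem posSemidef_vecMulVec_self (v : n → ℝ) : (vecMulVec v v).PosSemidef := by
  simpa using posSemidef_vecMulVec_self_star v

theorem trace_one_add_sum_sum_vecMulVec_le [DecidableEq n] {t : Finset κ} {s : Finset ι}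
    {v : κ → ι → n → ℝ} {c : ℝ} (hv : ∀ k ∈ t, ∀ i ∈ s, ∑ j, v k i j ^ 2 ≤ c) :
    (1 + ∑ k ∈ t, ∑ i ∈ s, vecMulVec (v k i) (v k i)).trace ≤ Fintype.card n + #t * #s * c := by
  have hsum : ∑ k ∈ t, ∑ i ∈ s, v k i ⬝ᵥ v k i ≤ ∑ k ∈ t, ∑ i ∈ s, c :=
    sum_le_sum fun k hk => sum_le_sum fun i hi => by
      simpa only [dotProduct, sq] using hv k hk i hi
  simp only [trace_add, trace_one, trace_sum, trace_vecMulVec]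
  simp only [sum_const, nsmul_eq_mul] at hsum
  linarith

variable [DecidableEq n]

theorem det_add_vecMulVec {α : Type*} [CommRing α] {A : Matrix n n α} (hA : IsUnit A.det)
    (u v : n → α) : (A + vecMulVec u v).det = A.det * (1 + v ⬝ᵥ A⁻¹ *ᵥ u) := by
  rw [vecMulVec_eq Unit, det_add_replicateCol_mul_replicateRow hA, Matrix.mul_assoc,
    ← replicateCol_mulVec]
  simp [det_unique, replicateRow_mul_replicateCol_apply]

theorem PosSemidef.dotProduct_inv_mulVec_nonneg {A : Matrix n n ℝ} (hA : A.PosSemidef)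
    (v : n → ℝ) : 0 ≤ v ⬝ᵥ A⁻¹ *ᵥ v := by
  simpa using hA.inv.dotProduct_mulVec_nonneg v

theorem PosDef.det_le_det_add_vecMulVec_self {A : Matrix n n ℝ} (hA : A.PosDef) (v : n → ℝ) :
    A.det ≤ (A + vecMulVec v v).det := by
  rw [det_add_vecMulVec hA.det_pos.ne'.isUnit]
  exact le_mul_of_one_le_right hA.det_pos.le
    (le_add_of_nonneg_right (hA.posSemidef.dotProduct_inv_mulVec_nonneg v))

theorem PosDef.det_le_det_add {A P : Matrix n n ℝ} (hA : A.PosDef) (hP : P.PosSemidef) :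
    A.det ≤ (A + P).det := by
  obtain ⟨m, v, rfl⟩ := posSemidef_iff_eq_sum_vecMulVec.mp hP
  simp only [star_trivial]
  suffices ∀ s : Finset (Fin m), (A + ∑ i ∈ s, vecMulVec (v i) (v i)).PosDef ∧
      A.det ≤ (A + ∑ i ∈ s, vecMulVec (v i) (v i)).det from (this univ).2
  intro s
  induction s using Finset.induction_on with
  | empty => simpa using hA
  | insert j s hj ih =>
    rw [sum_insert hj, add_comm (vecMulVec _ _), ← add_assoc]
    exact ⟨ih.1.add_posSemidef (posSemidef_vecMulVec_self _),
      ih.2.trans (ih.1.det_le_det_add_vecMulVec_self _)⟩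

theorem PosDef.log_one_add_le_log_det_add_sum_sub {A : Matrix n n ℝ} (hA : A.PosDef)
    (s : Finset ι) (v : ι → n → ℝ) {j : ι} (hj : j ∈ s) :
    Real.log (1 + v j ⬝ᵥ A⁻¹ *ᵥ v j) ≤
      Real.log (A + ∑ i ∈ s, vecMulVec (v i) (v i)).det - Real.log A.det := by
  classical
  have hq := hA.posSemidef.dotProduct_inv_mulVec_nonneg (v j)
  have hdet : A.det * (1 + v j ⬝ᵥ A⁻¹ *ᵥ v j) ≤ (A + ∑ i ∈ s, vecMulVec (v i) (v i)).det := by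
    rw [← det_add_vecMulVec hA.det_pos.ne'.isUnit, ← add_sum_erase s _ hj, ← add_assoc]
    exact (hA.add_posSemidef (posSemidef_vecMulVec_self _)).det_le_det_add
      (posSemidef_sum _ fun i _ => posSemidef_vecMulVec_self _)
  rw [le_sub_iff_add_le', ← Real.log_mul hA.det_pos.ne' (by positivity)]
  exact Real.log_le_log (mul_pos hA.det_pos (by positivity)) hdet

theorem PosDef.sum_min_one_le_two_mul_card_mul_log_det_add_sum_sub {A : Matrix n n ℝ}
    (hA : A.PosDef) (s : Finset ι) (v : ι → n → ℝ) :
    ∑ j ∈ s, min 1 (v j ⬝ᵥ A⁻¹ *ᵥ v j) ≤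
      2 * #s * (Real.log (A + ∑ i ∈ s, vecMulVec (v i) (v i)).det - Real.log A.det) := by
  calc ∑ j ∈ s, min 1 (v j ⬝ᵥ A⁻¹ *ᵥ v j)
      ≤ ∑ j ∈ s, 2 * Real.log (1 + v j ⬝ᵥ A⁻¹ *ᵥ v j) := sum_le_sum fun j _ =>
        Real.min_one_le_two_mul_log_one_add (hA.posSemidef.dotProduct_inv_mulVec_nonneg (v j))
    _ ≤ ∑ _j ∈ s, 2 * (Real.log (A + ∑ i ∈ s, vecMulVec (v i) (v i)).det - Real.log A.det) :=
        sum_le_sum fun j hj => by gcongr; exact hA.log_one_add_le_log_det_add_sum_sub s v hj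
    _ = _ := by rw [sum_const, nsmul_eq_mul]; ring

theorem PosSemidef.det_le_trace_div_card_pow {A : Matrix n n ℝ} (hA : A.PosSemidef) :
    A.det ≤ (A.trace / Fintype.card n) ^ Fintype.card n := by
  rw [hA.isHermitian.det_eq_prod_eigenvalues, hA.isHermitian.trace_eq_sum_eigenvalues]
  simpa using Real.prod_le_sum_div_card_pow univ fun i _ => hA.eigenvalues_nonneg i

theorem PosDef.log_det_le_card_mul_log {A : Matrix n n ℝ} (hA : A.PosDef) {c : ℝ}
    (hc : A.trace ≤ Fintype.card n * c) : Real.log A.det ≤ Fintype.card n * Real.log c := by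
  rw [← Real.log_pow]
  refine Real.log_le_log hA.det_pos (hA.posSemidef.det_le_trace_div_card_pow.trans ?_)
  rcases isEmpty_or_nonempty n with hn | hn
  · simp
  · gcongr
    · exact div_nonneg hA.posSemidef.trace_nonneg (Nat.cast_nonneg _)
    · rwa [div_le_iff₀' (by positivity)]

section BatchedUpdates

variable {A : ℕ → Matrix n n ℝ} {s : Finset ι} {v : ℕ → ι → n → ℝ}

theorem posDef_of_batched_updates (hA1 : A 1 = 1)
    (hArec : ∀ k, 1 ≤ k → A (k + 1) = A k + ∑ i ∈ s, vecMulVec (v k i) (v k i))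
    {k : ℕ} (hk : 1 ≤ k) : (A k).PosDef := by
  obtain ⟨N, rfl⟩ := Nat.exists_eq_add_of_le' hk
  rw [eq_add_sum_Icc_of_succ_eq_add hArec, hA1]
  exact PosDef.one.add_posSemidef
    (posSemidef_sum _ fun k _ => posSemidef_sum _ fun i _ => posSemidef_vecMulVec_self _)

theorem sum_sum_min_one_le_two_mul_card_mul_log_det_of_batched_updates (hA1 : A 1 = 1)
    (hArec : ∀ k, 1 ≤ k → A (k + 1) = A k + ∑ i ∈ s, vecMulVec (v k i) (v k i)) (N : ℕ) :
    ∑ k ∈ Icc 1 N, ∑ i ∈ s, min 1 (v k i ⬝ᵥ (A k)⁻¹ *ᵥ v k i) ≤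
      2 * #s * Real.log (A (N + 1)).det := by
  calc ∑ k ∈ Icc 1 N, ∑ i ∈ s, min 1 (v k i ⬝ᵥ (A k)⁻¹ *ᵥ v k i)
      ≤ ∑ k ∈ Icc 1 N, 2 * #s * (Real.log (A (k + 1)).det - Real.log (A k).det) :=
        sum_le_sum fun k hk => by
          rw [hArec k (mem_Icc.1 hk).1]
          exact (posDef_of_batched_updates hA1 hArec (mem_Icc.1 hk).1)
            |>.sum_min_one_le_two_mul_card_mul_log_det_add_sum_sub s (v k)
    _ = 2 * #s * (Real.log (A (N + 1)).det - Real.log (A 1).det) := by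
        rw [← mul_sum, ← Ico_add_one_right_eq_Icc,
          sum_Ico_sub (fun k => Real.log (A k).det) (by omega)]
    _ = 2 * #s * Real.log (A (N + 1)).det := by simp [hA1]

end BatchedUpdates

end Matrix

theorem episode_batched_elliptical_potential_general {d : ℕ} (N H : ℕ)
    (Cφ : ℝ)
    (φ : ℕ → ℕ → Fin d → ℝ)
    (hφ : ∀ n ∈ Finset.Icc 1 N, ∀ h ∈ Finset.Icc 1 H, ∑ i, (φ n h i) ^ 2 ≤ Cφ * d)
    (A : ℕ → Matrix (Fin d) (Fin d) ℝ)
    (hA1 : A 1 = 1)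
    (hArec : ∀ n, 1 ≤ n →
      A (n + 1) = A n + ∑ h ∈ Finset.Icc 1 H, vecMulVec (φ n h) (φ n h))
    (w : ℕ → ℕ → ℝ)
    (hw : ∀ n h, w n h = φ n h ⬝ᵥ ((A n)⁻¹ *ᵥ φ n h)) :
    (∑ n ∈ Finset.Icc 1 N, ∑ h ∈ Finset.Icc 1 H, min 1 (w n h)) ≤
        2 * H * Real.log (A (N + 1)).det ∧
      2 * H * Real.log (A (N + 1)).det ≤ 2 * H * d * Real.log (N * H * Cφ + 1) := by
  have htrace : (A (N + 1)).trace ≤ Fintype.card (Fin d) * (N * H * Cφ + 1) := by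
    rw [eq_add_sum_Icc_of_succ_eq_add hArec, hA1]
    refine (trace_one_add_sum_sum_vecMulVec_le hφ).trans_eq ?_
    simp only [Nat.card_Icc, Fintype.card_fin, add_tsub_cancel_right]
    ring
  have hlogdet :=
    (posDef_of_batched_updates hA1 hArec (Nat.le_add_left 1 N)).log_det_le_card_mul_log htrace
  rw [Fintype.card_fin] at hlogdet
  simp_rw [hw]
  constructor
  · simpa using sum_sum_min_one_le_two_mul_card_mul_log_det_of_batched_updates hA1 hArec N
  · rw [mul_assoc _ (d : ℝ)]
    gcongr

/-- Lemma 6 (episode-batched elliptical-potential bound): with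
`A_1 = I`, `A_{n+1} = A_n + ∑_{h=1}^H φ_{n,h} φ_{n,h}ᵀ` and
`w_{n,h}² = φ_{n,h}ᵀ A_n⁻¹ φ_{n,h}`,
`∑_{n=1}^N ∑_{h=1}^H min(1, w_{n,h}²) ≤ 2H ln det(A_{N+1}) ≤ 2Hd ln(NHCφ + 1)`. -/
theorem episode_batched_elliptical_potential {d : ℕ} (N H : ℕ)
    (hN : 1 ≤ N) (hH : 1 ≤ H) (Cφ : ℝ) (hCφ : 0 < Cφ)
    (φ : ℕ → ℕ → Fin d → ℝ)
    (hφ : ∀ n ∈ Finset.Icc 1 N, ∀ h ∈ Finset.Icc 1 H, ∑ i, (φ n h i) ^ 2 ≤ Cφ * d)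
    (A : ℕ → Matrix (Fin d) (Fin d) ℝ)
    (hA1 : A 1 = 1)
    (hArec : ∀ n, 1 ≤ n →
      A (n + 1) = A n + ∑ h ∈ Finset.Icc 1 H, vecMulVec (φ n h) (φ n h))
    (w : ℕ → ℕ → ℝ)
    (hw : ∀ n h, w n h = φ n h ⬝ᵥ ((A n)⁻¹ *ᵥ φ n h)) :
    (∑ n ∈ Finset.Icc 1 N, ∑ h ∈ Finset.Icc 1 H, min 1 (w n h)) ≤
        2 * H * Real.log (A (N + 1)).det ∧
      2 * H * Real.log (A (N + 1)).det ≤ 2 * H * d * Real.log (N * H * Cφ + 1) :=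
  episode_batched_elliptical_potential_general N H Cφ φ hφ A hA1 hArec w hw
end

section
/- Let A ∈ ℝ^{d×d} be positive definite, let H ≥ 1 and φ_1, …, φ_H ∈ ℝ^d, and set w_h² = φ_hᵀ A^{-1} φ_h. Then det(A + ∑_{h=1}^{H} φ_h φ_hᵀ) ≥ det(A) · (1 + ∑_{h=1}^{H} w_h²) ≥ det(A) · ∏_{h=1}^{H} (1 + w_h²)^{1/H}. -/
/-!
Stack the vectors `φ h` as the rows of a matrix `Φ`, so that `∑ h, φ h φ hᵀ = Φᵀ Φ`. The matrix
determinant lemma gives `det (A + Φᵀ Φ) = det A · det (1 + G)` for the Gram matrix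
`G = Φ A⁻¹ Φᵀ`, which is positive semidefinite with diagonal entries `w h`. If `λ i ≥ 0` are the
eigenvalues of `G`, then `det (1 + G) = ∏ (1 + λ i) ≥ 1 + ∑ λ i = 1 + tr G = 1 + ∑ w h`.
The second inequality is AM–GM for the numbers `1 + w h`.
-/

open Matrix Finset

theorem Finset.one_add_sum_le_prod_one_add {ι R : Type*} [CommSemiring R] [PartialOrder R]
    [IsOrderedRing R] (s : Finset ι) {f : ι → R} (hf : ∀ i ∈ s, 0 ≤ f i) :
    1 + ∑ i ∈ s, f i ≤ ∏ i ∈ s, (1 + f i) := by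
  classical
  induction s using Finset.induction with
  | empty => simp
  | insert a s ha ih =>
    rw [sum_insert ha, prod_insert ha]
    have hfa : 0 ≤ f a := hf a (mem_insert_self a s)
    have hfs : ∀ i ∈ s, 0 ≤ f i := fun i hi => hf i (mem_insert_of_mem hi)
    calc 1 + (f a + ∑ i ∈ s, f i)
        ≤ (1 + f a) * (1 + ∑ i ∈ s, f i) := by
          rw [show (1 + f a) * (1 + ∑ i ∈ s, f i) = 1 + (f a + ∑ i ∈ s, f i) + f a * ∑ i ∈ s, f i
            by ring]
          exact le_add_of_nonneg_right (mul_nonneg hfa (sum_nonneg hfs))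
      _ ≤ (1 + f a) * ∏ i ∈ s, (1 + f i) :=
          mul_le_mul_of_nonneg_left (ih hfs) (add_nonneg zero_le_one hfa)

theorem Real.prod_one_add_rpow_one_div_card_le {ι : Type*} (s : Finset ι) {f : ι → ℝ}
    (hf : ∀ i ∈ s, 0 ≤ f i) :
    ∏ i ∈ s, (1 + f i) ^ ((1 : ℝ) / #s) ≤ 1 + ∑ i ∈ s, f i := by
  rcases s.eq_empty_or_nonempty with rfl | hs
  · simp
  have hcard : (0 : ℝ) < #s := by exact_mod_cast hs.card_pos
  have hsum : 0 ≤ ∑ i ∈ s, f i := sum_nonneg hf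
  calc ∏ i ∈ s, (1 + f i) ^ ((1 : ℝ) / #s)
      ≤ ∑ i ∈ s, (1 : ℝ) / #s * (1 + f i) :=
        geom_mean_le_arith_mean_weighted s _ _ (fun _ _ => by positivity)
          (by simp [hcard.ne']) (fun i hi => by linarith [hf i hi])
    _ = 1 + (∑ i ∈ s, f i) / #s := by
        rw [← mul_sum, sum_add_distrib, sum_const, nsmul_one]
        field_simp
    _ ≤ 1 + ∑ i ∈ s, f i := by
        gcongr
        exact div_le_self hsum (by exact_mod_cast hs.card_pos)

namespace Matrix

theorem transpose_mul_eq_sum_vecMulVec {ι m n α : Type*} [Fintype ι] [CommSemiring α]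
    (X : Matrix ι m α) (Y : Matrix ι n α) : Xᵀ * Y = ∑ i, vecMulVec (X i) (Y i) := by
  ext j k
  simp [mul_apply, vecMulVec_apply, sum_apply]

variable {n : Type*} [Fintype n] [DecidableEq n]

theorem PosSemidef.one_add_trace_le_det_one_add {N : Matrix n n ℝ} (hN : N.PosSemidef) :
    1 + N.trace ≤ (1 + N).det := by
  set U : Matrix n n ℝ := ↑hN.isHermitian.eigenvectorUnitary
  have hUU : U * star U = 1 := mem_unitaryGroup_iff.mp hN.isHermitian.eigenvectorUnitary.2
  have hUU' : star U * U = 1 := mem_unitaryGroup_iff'.mp hN.isHermitian.eigenvectorUnitary.2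
  have hdiag : diagonal (fun i => 1 + hN.isHermitian.eigenvalues i) =
      1 + diagonal hN.isHermitian.eigenvalues := by
    rw [← diagonal_one, diagonal_add]
  have hconj :
      1 + N = U * diagonal (fun i => 1 + hN.isHermitian.eigenvalues i) * star U := by
    have hspec := hN.isHermitian.spectral_theorem
    rw [Unitary.conjStarAlgAut_apply] at hspec
    rw [hdiag, mul_add, add_mul, mul_one, hUU]
    simpa using hspec
  have hdet : (1 + N).det = ∏ i, (1 + hN.isHermitian.eigenvalues i) := by
    rw [hconj, det_conj_of_mul_eq_one hUU hUU', det_diagonal]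
  rw [hdet, hN.isHermitian.trace_eq_sum_eigenvalues]
  exact one_add_sum_le_prod_one_add _ fun i _ => hN.eigenvalues_nonneg i

theorem PosDef.det_mul_one_add_sum_le_det_add_sum_vecMulVec {ι : Type*} [Fintype ι]
    {A : Matrix n n ℝ} (hA : A.PosDef) (φ : ι → n → ℝ) :
    A.det * (1 + ∑ i, φ i ⬝ᵥ (A⁻¹ *ᵥ φ i)) ≤ (A + ∑ i, vecMulVec (φ i) (φ i)).det := by
  classical
  set Φ : Matrix ι n ℝ := Matrix.of φ
  have hG : (Φ * A⁻¹ * Φᵀ).PosSemidef := by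
    simpa using hA.inv.posSemidef.mul_mul_conjTranspose_same Φ
  have htrace : (Φ * A⁻¹ * Φᵀ).trace = ∑ i, φ i ⬝ᵥ (A⁻¹ *ᵥ φ i) := by
    simp only [trace, diag, mul_apply, dotProduct, mulVec, mul_sum, sum_mul, transpose_apply,
      of_apply, Φ, mul_assoc]
    exact sum_congr rfl fun _ _ => sum_comm
  have hsum : ∑ i, vecMulVec (φ i) (φ i) = Φᵀ * Φ := (transpose_mul_eq_sum_vecMulVec Φ Φ).symm
  rw [hsum, det_add_mul _ _ hA.det_pos.ne'.isUnit, ← htrace]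
  exact mul_le_mul_of_nonneg_left hG.one_add_trace_le_det_one_add hA.det_pos.le

end Matrix

theorem batched_determinant_growth_general {d : ℕ} (H : ℕ)
    (A : Matrix (Fin d) (Fin d) ℝ) (hA : A.PosDef)
    (φ : Fin H → Fin d → ℝ) (w : Fin H → ℝ)
    (hw : ∀ h, w h = φ h ⬝ᵥ (A⁻¹ *ᵥ φ h)) :
    A.det * (1 + ∑ h, w h) ≤ (A + ∑ h, vecMulVec (φ h) (φ h)).det ∧
      A.det * ∏ h, (1 + w h) ^ ((1 : ℝ) / H) ≤ A.det * (1 + ∑ h, w h) := by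
  have hw_nonneg : ∀ h, 0 ≤ w h := fun h => by
    simpa [hw h] using hA.inv.posSemidef.dotProduct_mulVec_nonneg (φ h)
  refine ⟨?_, ?_⟩
  · simpa only [hw] using hA.det_mul_one_add_sum_le_det_add_sum_vecMulVec φ
  · refine mul_le_mul_of_nonneg_left ?_ hA.det_pos.le
    simpa using Real.prod_one_add_rpow_one_div_card_le univ fun h _ => hw_nonneg h

/-- Key intermediate determinant estimate of Lemma 6: for `A` positive definite and
`w_h² = φ_hᵀ A⁻¹ φ_h`,
`det(A + ∑ φ_h φ_hᵀ) ≥ det(A)(1 + ∑ w_h²) ≥ det(A) ∏ (1 + w_h²)^{1/H}`. -/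
theorem batched_determinant_growth {d : ℕ} (H : ℕ) (hH : 1 ≤ H)
    (A : Matrix (Fin d) (Fin d) ℝ) (hA : A.PosDef)
    (φ : Fin H → Fin d → ℝ) (w : Fin H → ℝ)
    (hw : ∀ h, w h = φ h ⬝ᵥ (A⁻¹ *ᵥ φ h)) :
    A.det * (1 + ∑ h, w h) ≤ (A + ∑ h, vecMulVec (φ h) (φ h)).det ∧
      A.det * ∏ h, (1 + w h) ^ ((1 : ℝ) / H) ≤ A.det * (1 + ∑ h, w h) :=
  batched_determinant_growth_general H A hA φ w hw
end

section
/- Let T ≥ 1, let φ_t ∈ ℝ^d and η_t ∈ ℝ^{d'} for t ∈ {1,…,T}, and let M* ∈ ℝ^{d×d'}. Define A_t = I + ∑_{s<t} φ_s φ_sᵀ, M_t = A_t^{-1} ∑_{s<t} φ_s (M*ᵀ φ_s + η_s)ᵀ, w̃_t² = φ_tᵀ A_t^{-1} φ_t, and Z_t = tr[(M* − M_t)ᵀ A_t (M* − M_t)]. Then for every t ∈ {1,…,T}, Z_t ≤ ‖M*‖_F² + 2 ∑_{s<t} φ_sᵀ (M_s − M*) η_s / (1 + w̃_s²) + ∑_{s<t}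 ‖η_s‖₂² · w̃_s² / (1 + w̃_s²). -/
/-!
Write `E_t = M* - M_t`. The normal equations give `A_{t+1} E_{t+1} = A_t E_t - φ_t η_tᵀ`, and since
`A_{t+1} A_t⁻¹ φ_t = (1 + w̃_t²) φ_t` this is solved column by column: a column `e'` of `E_{t+1}` is
`e - (φ_tᵀ e + c) / (1 + w̃_t²) • A_t⁻¹ φ_t`, with `e` the column of `E_t` and `c` the matching
entry of `η_t`. Expanding the quadratic form gives
`e'ᵀ A_{t+1} e' = eᵀ A_t e + (c² w̃_t² - 2 c φ_tᵀ e - (φ_tᵀ e)²) / (1 + w̃_t²)`;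
dropping the square and summing over columns and over `s < t`, starting from `Z_1 = ‖M*‖_F²`,
gives the bound.
-/

open Matrix Finset

section
variable {n m : Type*} [Fintype n] [Fintype m]

theorem trace_transpose_mul_mul_eq_sum (B : Matrix n n ℝ) (F : Matrix n m ℝ) :
    (Fᵀ * B * F).trace = ∑ j, Fᵀ j ⬝ᵥ B *ᵥ Fᵀ j := by
  simp only [Matrix.trace, Matrix.diag_apply, mul_apply, mulVec, dotProduct, transpose_apply,
    sum_mul, mul_sum]
  exact sum_congr rfl fun j _ => by rw [sum_comm]; simp only [mul_assoc, mul_left_comm]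

theorem trace_transpose_mul_self_eq_sum_sq (F : Matrix n m ℝ) :
    (Fᵀ * F).trace = ∑ i, ∑ j, F i j ^ 2 := by
  simp only [Matrix.trace, Matrix.diag_apply, mul_apply, transpose_apply, sq]
  exact sum_comm

theorem Matrix.PosDef.add_vecMulVec_self {A : Matrix n n ℝ} (hA : A.PosDef) (φ : n → ℝ) :
    (A + vecMulVec φ φ).PosDef :=
  hA.add_posSemidef <| by simpa using posSemidef_vecMulVec_self_star φ

variable [DecidableEq n]

theorem posDef_one_add_sum_vecMulVec_self {ι : Type*} (s : Finset ι) (φ : ι → n → ℝ) :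
    (1 + ∑ i ∈ s, vecMulVec (φ i) (φ i)).PosDef :=
  PosDef.one.add_posSemidef <| posSemidef_sum s fun i _ => by
    simpa using posSemidef_vecMulVec_self_star (φ i)

theorem one_add_dotProduct_inv_mulVec_pos {A : Matrix n n ℝ} (hA : A.PosDef) (φ : n → ℝ) :
    0 < 1 + φ ⬝ᵥ A⁻¹ *ᵥ φ := by
  have := hA.inv.posSemidef.dotProduct_mulVec_nonneg φ
  rw [star_trivial] at this
  linarith

theorem dotProduct_add_vecMulVec_self_mulVec_eq {A : Matrix n n ℝ} (hA : A.PosDef)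
    {φ e e' : n → ℝ} {c : ℝ} (h : (A + vecMulVec φ φ) *ᵥ e' = A *ᵥ e - c • φ) :
    e' ⬝ᵥ (A + vecMulVec φ φ) *ᵥ e' = e ⬝ᵥ A *ᵥ e +
      (c ^ 2 * (φ ⬝ᵥ A⁻¹ *ᵥ φ) - 2 * c * (φ ⬝ᵥ e) - (φ ⬝ᵥ e) ^ 2) / (1 + φ ⬝ᵥ A⁻¹ *ᵥ φ) := by
  have hw := one_add_dotProduct_inv_mulVec_pos hA φ
  set u := A⁻¹ *ᵥ φ
  set w := φ ⬝ᵥ u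
  set p := φ ⬝ᵥ e
  have hAu : A *ᵥ u = φ := by
    rw [mulVec_mulVec, mul_nonsing_inv _ ((isUnit_iff_isUnit_det _).mp hA.isUnit), one_mulVec]
  have huA : u ⬝ᵥ A *ᵥ e = p := by
    rw [dotProduct_mulVec, ← mulVec_transpose, (isHermitian_iff_isSymm.mp hA.isHermitian).eq, hAu]
  have he' : e' = e - ((p + c) / (1 + w)) • u := by
    apply mulVec_injective_iff_isUnit.2 (hA.add_vecMulVec_self φ).isUnit
    simp only [h, mulVec_sub, mulVec_smul, add_mulVec, hAu, vecMulVec_mulVec, op_smul_eq_smul]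
    rw [show φ + w • φ = (1 + w) • φ by module, smul_smul, div_mul_cancel₀ _ hw.ne']
    module
  calc e' ⬝ᵥ (A + vecMulVec φ φ) *ᵥ e' = e' ⬝ᵥ (A *ᵥ e - c • φ) := by rw [h]
    _ = _ := by
      rw [he']
      simp only [sub_dotProduct, dotProduct_sub, smul_dotProduct, dotProduct_smul, huA,
        smul_eq_mul, dotProduct_comm u φ, dotProduct_comm e φ]
      field_simp
      ring

theorem trace_transpose_mul_add_vecMulVec_self_mul_le {A : Matrix n n ℝ} (hA : A.PosDef)
    {φ : n → ℝ} {η : m → ℝ} {E E' : Matrix n m ℝ}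
    (h : (A + vecMulVec φ φ) * E' = A * E - vecMulVec φ η) :
    (E'ᵀ * (A + vecMulVec φ φ) * E').trace ≤ (Eᵀ * A * E).trace +
      2 * (φ ⬝ᵥ (-E) *ᵥ η) / (1 + φ ⬝ᵥ A⁻¹ *ᵥ φ) +
      (∑ j, η j ^ 2) * (φ ⬝ᵥ A⁻¹ *ᵥ φ) / (1 + φ ⬝ᵥ A⁻¹ *ᵥ φ) := by
  set w := φ ⬝ᵥ A⁻¹ *ᵥ φ
  have hcol : ∀ j, (A + vecMulVec φ φ) *ᵥ E'ᵀ j = A *ᵥ Eᵀ j - η j • φ := fun j => by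
    ext i
    have := congrFun (congrFun h i) j
    simp only [mul_apply, Matrix.sub_apply, vecMulVec_apply] at this
    simpa only [mulVec, dotProduct, Pi.sub_apply, Pi.smul_apply, transpose_apply, smul_eq_mul,
      mul_comm (η j)] using this
  have hlin : φ ⬝ᵥ (-E) *ᵥ η = -∑ j, η j * (φ ⬝ᵥ Eᵀ j) := by
    rw [neg_mulVec, dotProduct_neg, dotProduct_mulVec]
    simp [dotProduct, vecMul, mul_comm]
  calc (E'ᵀ * (A + vecMulVec φ φ) * E').trace
      ≤ ∑ j, (Eᵀ j ⬝ᵥ A *ᵥ Eᵀ j + (η j ^ 2 * w - 2 * η j * (φ ⬝ᵥ Eᵀ j)) / (1 + w)) := by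
        rw [trace_transpose_mul_mul_eq_sum]
        refine sum_le_sum fun j _ => ?_
        rw [dotProduct_add_vecMulVec_self_mulVec_eq hA (hcol j)]
        gcongr _ + ?_ / _
        · exact (one_add_dotProduct_inv_mulVec_pos hA φ).le
        · exact sub_le_self _ (sq_nonneg _)
    _ = _ := by
        rw [sum_add_distrib, ← trace_transpose_mul_mul_eq_sum, hlin, ← sum_div]
        simp only [sum_sub_distrib, ← sum_mul, mul_assoc, ← mul_sum]
        ring

end

theorem ridge_error_growth_bound_general {d d' : ℕ} (T : ℕ)
    (φ : ℕ → Fin d → ℝ) (η : ℕ → Fin d' → ℝ)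
    (Mstar : Matrix (Fin d) (Fin d') ℝ)
    (A : ℕ → Matrix (Fin d) (Fin d) ℝ)
    (hA : ∀ t, A t = 1 + ∑ s ∈ Finset.Ico 1 t, vecMulVec (φ s) (φ s))
    (M : ℕ → Matrix (Fin d) (Fin d') ℝ)
    (hM : ∀ t, M t = (A t)⁻¹ *
      ∑ s ∈ Finset.Ico 1 t, vecMulVec (φ s) (Mstarᵀ *ᵥ φ s + η s))
    (w : ℕ → ℝ) (hw : ∀ t, w t = φ t ⬝ᵥ ((A t)⁻¹ *ᵥ φ t))
    (Z : ℕ → ℝ)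
    (hZ : ∀ t, Z t = ((Mstar - M t)ᵀ * A t * (Mstar - M t)).trace) :
    ∀ t ∈ Finset.Icc 1 T,
      Z t ≤ (∑ i, ∑ j, (Mstar i j) ^ 2) +
        2 * ∑ s ∈ Finset.Ico 1 t, (φ s ⬝ᵥ ((M s - Mstar) *ᵥ η s)) / (1 + w s) +
        ∑ s ∈ Finset.Ico 1 t, (∑ j, (η s j) ^ 2) * w s / (1 + w s) := by
  have hpd (t : ℕ) : (A t).PosDef := hA t ▸ posDef_one_add_sum_vecMulVec_self _ φ
  have hAM (t : ℕ) : A t * M t =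
      ∑ s ∈ Finset.Ico 1 t, vecMulVec (φ s) (Mstarᵀ *ᵥ φ s + η s) := by
    rw [hM, mul_nonsing_inv_cancel_left _ _ ((isUnit_iff_isUnit_det _).mp (hpd t).isUnit)]
  have hZ1 : Z 1 = ∑ i, ∑ j, Mstar i j ^ 2 := by
    simp only [hZ, hM, hA, Ico_self, sum_empty, add_zero, inv_one, Matrix.mul_zero, sub_zero,
      Matrix.mul_one, trace_transpose_mul_self_eq_sum_sq]
  intro t ht
  rw [mem_Icc] at ht
  obtain ⟨ht, -⟩ := ht
  induction t, ht using Nat.le_induction with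
  | base => simp [hZ1]
  | succ t ht IH =>
    have hA' : A (t + 1) = A t + vecMulVec (φ t) (φ t) := by
      rw [hA, hA, sum_Ico_succ_top ht, add_assoc]
    have herr : A (t + 1) * (Mstar - M (t + 1)) =
        A t * (Mstar - M t) - vecMulVec (φ t) (η t) := by
      rw [Matrix.mul_sub, Matrix.mul_sub, hAM, hAM, hA', sum_Ico_succ_top ht, Matrix.add_mul,
        vecMulVec_mul, ← mulVec_transpose, vecMulVec_add]
      abel
    have hstep := trace_transpose_mul_add_vecMulVec_self_mul_le (hpd t) (hA' ▸ herr)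
    rw [← hA', ← hZ, ← hZ, ← hw, neg_sub, mul_div_assoc] at hstep
    rw [sum_Ico_succ_top ht, sum_Ico_succ_top ht]
    linarith

/-- Lemma 8: growth bound for the weighted ridge-regression estimation error
`Z_t = tr[(M* − M_t)ᵀ A_t (M* − M_t)]`, where `A_t = I + ∑_{s<t} φ_s φ_sᵀ`,
`M_t = A_t⁻¹ ∑_{s<t} φ_s (M*ᵀφ_s + η_s)ᵀ` and `w̃_t² = φ_tᵀ A_t⁻¹ φ_t`. -/
theorem ridge_error_growth_bound {d d' : ℕ} (T : ℕ) (hT : 1 ≤ T)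
    (φ : ℕ → Fin d → ℝ) (η : ℕ → Fin d' → ℝ)
    (Mstar : Matrix (Fin d) (Fin d') ℝ)
    (A : ℕ → Matrix (Fin d) (Fin d) ℝ)
    (hA : ∀ t, A t = 1 + ∑ s ∈ Finset.Ico 1 t, vecMulVec (φ s) (φ s))
    (M : ℕ → Matrix (Fin d) (Fin d') ℝ)
    (hM : ∀ t, M t = (A t)⁻¹ *
      ∑ s ∈ Finset.Ico 1 t, vecMulVec (φ s) (Mstarᵀ *ᵥ φ s + η s))
    (w : ℕ → ℝ) (hw : ∀ t, w t = φ t ⬝ᵥ ((A t)⁻¹ *ᵥ φ t))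
    (Z : ℕ → ℝ)
    (hZ : ∀ t, Z t = ((Mstar - M t)ᵀ * A t * (Mstar - M t)).trace) :
    ∀ t ∈ Finset.Icc 1 T,
      Z t ≤ (∑ i, ∑ j, (Mstar i j) ^ 2) +
        2 * ∑ s ∈ Finset.Ico 1 t, (φ s ⬝ᵥ ((M s - Mstar) *ᵥ η s)) / (1 + w s) +
        ∑ s ∈ Finset.Ico 1 t, (∑ j, (η s j) ^ 2) * w s / (1 + w s) :=
  ridge_error_growth_bound_general T φ η Mstar A hA M hM w hw Z hZ
end

section
/- Let t ≥ 1 and let x_1, …, x_t ∈ ℝ^d be vectors with ‖x_i‖₂ ≤ 1 for all i. Let K ∈ ℝ^{t×t} be the Gram matrix K[i,j] = ⟨x_i, x_j⟩. Then ln det(I_t + K) ≤ d · ln(1 + t). -/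
open Matrix Finset

/-- If the kernel arises from `d`-dimensional features of Euclidean norm at most 1,
then `ln det(I_t + K) ≤ d ln(1 + t)` for the Gram matrix `K` of any `t` points;
hence the effective dimension of the kernel space is at most `d`. -/
theorem log_det_gram_le {d : ℕ} (t : ℕ) (ht : 1 ≤ t)
    (x : Fin t → Fin d → ℝ)
    (hx : ∀ i, Real.sqrt (∑ j, (x i j) ^ 2) ≤ 1)
    (K : Matrix (Fin t) (Fin t) ℝ)
    (hK : ∀ i j, K i j = x i ⬝ᵥ x j) :
    Real.log (1 + K).det ≤ d * Real.log (1 + t) := by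
  set X : Matrix (Fin t) (Fin d) ℝ := Matrix.of x with hX
  have hKX : K = X * Xᴴ := by
    ext i j
    simp [hK, Matrix.mul_apply, dotProduct, X, Matrix.conjTranspose_apply]
  set A : Matrix (Fin d) (Fin d) ℝ := Xᴴ * X with hA
  have hApsd : A.PosSemidef := Matrix.posSemidef_conjTranspose_mul_self X
  have hAh : A.IsHermitian := hApsd.1
  -- each coordinate squared sum is ≤ 1
  have hnorm : ∀ i, ∑ j, (x i j) ^ 2 ≤ 1 := by
    intro i
    have h0 : (0:ℝ) ≤ ∑ j, (x i j) ^ 2 := Finset.sum_nonneg fun j _ => sq_nonneg _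
    nlinarith [hx i, Real.sq_sqrt h0, Real.sqrt_nonneg (∑ j, (x i j) ^ 2)]
  -- trace bound
  have htrace : A.trace ≤ (t : ℝ) := by
    have : A.trace = ∑ i : Fin t, ∑ j : Fin d, (x i j) ^ 2 := by
      rw [Matrix.trace]
      rw [Finset.sum_comm]
      congr 1
      ext i
      simp [Matrix.diag, hA, Matrix.mul_apply, Matrix.conjTranspose_apply, X, sq]
    rw [this]
    calc ∑ i : Fin t, ∑ j : Fin d, (x i j) ^ 2 ≤ ∑ _i : Fin t, (1:ℝ) :=
          Finset.sum_le_sum fun i _ => hnorm i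
      _ = (t : ℝ) := by simp
  -- spectral decomposition
  set U : Matrix (Fin d) (Fin d) ℝ := (hAh.eigenvectorUnitary : Matrix (Fin d) (Fin d) ℝ) with hU
  have hUU : U * star U = 1 := Matrix.mem_unitaryGroup_iff.mp hAh.eigenvectorUnitary.2
  have hUU' : star U * U = 1 := Matrix.mem_unitaryGroup_iff'.mp hAh.eigenvectorUnitary.2
  set ev : Fin d → ℝ := hAh.eigenvalues with hev
  have hspec : A = U * Matrix.diagonal ev * star U := by
    have := hAh.spectral_theorem
    simpa [hU, hev] using this
  have hsum : ∑ j, ev j = A.trace := by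
    rw [hspec, Matrix.trace_mul_cycle, hUU', Matrix.one_mul, Matrix.trace_diagonal]
  have hev_nonneg : ∀ j, 0 ≤ ev j := fun j => hApsd.eigenvalues_nonneg j
  have hev_le : ∀ j, ev j ≤ (t : ℝ) := by
    intro j
    calc ev j ≤ ∑ j', ev j' :=
          Finset.single_le_sum (fun j' _ => hev_nonneg j') (Finset.mem_univ j)
      _ = A.trace := hsum
      _ ≤ (t : ℝ) := htrace
  -- determinant identity
  have hdet1 : (1 + K).det = (1 + A).det := by
    rw [hKX, hA, Matrix.det_one_add_mul_comm]
  have hdet2 : (1 + A).det = ∏ j, (1 + ev j) := by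
    have h1A : (1 + A) = U * Matrix.diagonal (fun j => 1 + ev j) * star U := by
      have hone : (1 : Matrix (Fin d) (Fin d) ℝ) = U * (1 : Matrix (Fin d) (Fin d) ℝ) * star U := by
        rw [Matrix.mul_one, hUU]
      calc (1 + A) = U * 1 * star U + U * Matrix.diagonal ev * star U := by
              rw [← hone, ← hspec]
        _ = U * (1 + Matrix.diagonal ev) * star U := by
              rw [Matrix.mul_add, Matrix.add_mul]
        _ = U * Matrix.diagonal (fun j => 1 + ev j) * star U := by
              rw [← Matrix.diagonal_one, Matrix.diagonal_add]
    rw [h1A, Matrix.det_mul, Matrix.det_mul, mul_comm, ← mul_assoc, ← Matrix.det_mul, hUU',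
      Matrix.det_one, one_mul, Matrix.det_diagonal]
  rw [hdet1, hdet2]
  have hpos : ∀ j ∈ Finset.univ, (0:ℝ) < 1 + ev j := fun j _ => by linarith [hev_nonneg j]
  have hprod_pos : (0:ℝ) < ∏ j, (1 + ev j) := Finset.prod_pos hpos
  have hprod_le : ∏ j, (1 + ev j) ≤ (1 + (t:ℝ)) ^ d := by
    calc ∏ j, (1 + ev j) ≤ ∏ _j : Fin d, (1 + (t:ℝ)) :=
          Finset.prod_le_prod (fun j _ => le_of_lt (hpos j (Finset.mem_univ j)))
            (fun j _ => by linarith [hev_le j])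
      _ = (1 + (t:ℝ)) ^ d := by simp
  calc Real.log (∏ j, (1 + ev j)) ≤ Real.log ((1 + (t:ℝ)) ^ d) :=
        Real.log_le_log hprod_pos hprod_le
    _ = d * Real.log (1 + t) := by rw [Real.log_pow]
end
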